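/- For every integer n ≥ 1 and every s ∈ (-1,1), ∫_{-1}^{1} log|s-t| (1-t²)^{-1/2} T_n(t) dt = -(π/n) T_n(s). -/

import Mathlib

/-!
Substituting `t = cos θ` and `s = cos φ` turns the integral into
`∫₀^π log |cos φ - cos θ| cos (n θ) dθ`. Since
`|cos φ - cos θ| = |1 - e^{i(θ-φ)}| |1 - e^{i(θ+φ)}| / 2`, the kernel splits into two translates of
the even, `2π`-periodic, integrable function `g θ = log |1 - e^{iθ}|²`, and translating by `±φ`
multiplies its cosine coefficients by `cos (n φ)`. Finally `∫₀^π g θ cos (n θ) dθ = -π / n`: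
integrate by parts against `sin (n θ) / n`; the boundary terms vanish, and
`g' θ sin (n θ) = sin θ sin (n θ) / (1 - cos θ)` is a trigonometric polynomial with constant
term `1`.
-/

open Real Set MeasureTheory intervalIntegral Polynomial.Chebyshev

lemma integral_one_sub_sq_rpow_neg_half_mul_eq_integral_comp_cos (f : ℝ → ℝ) :
    ∫ t in (-1:ℝ)..1, (1 - t ^ 2) ^ (-(1/2) : ℝ) * f t = ∫ θ in 0..π, f (cos θ) := by
  have hsubst := integral_Icc_deriv_smul_of_deriv_nonpos (f := cos) (f' := fun θ => -sin θ)
    (g := fun t => (1 - t ^ 2) ^ (-(1/2) : ℝ) * f t) continuousOn_cos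
    (fun θ _ => hasDerivAt_cos θ) (fun θ hθ => neg_nonpos.2 (sin_pos_of_pos_of_lt_pi hθ.1 hθ.2).le)
    pi_pos.le
  have hweight : ∀ θ ∈ Ioo 0 π, sin θ * (1 - cos θ ^ 2) ^ (-(1/2) : ℝ) = 1 := by
    intro θ hθ
    have hsin := sin_pos_of_pos_of_lt_pi hθ.1 hθ.2
    rw [← sin_sq, ← rpow_natCast, ← rpow_mul hsin.le]
    norm_num [rpow_neg_one, hsin.ne']
  simp only [cos_pi, cos_zero, smul_eq_mul, neg_mul, MeasureTheory.integral_neg, neg_inj] at hsubst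
  rw [integral_of_le (by norm_num), integral_of_le pi_pos.le, ← integral_Icc_eq_integral_Ioc,
    ← integral_Icc_eq_integral_Ioc, ← hsubst, integral_Icc_eq_integral_Ioo,
    integral_Icc_eq_integral_Ioo]
  refine setIntegral_congr_fun measurableSet_Ioo fun θ hθ => ?_
  rw [← mul_assoc, hweight θ hθ, one_mul]

/-- `log |1 - e^{iθ}|²`. -/
noncomputable def logChordSq (θ : ℝ) : ℝ := log (2 - 2 * cos θ)

lemma logChordSq_neg (θ : ℝ) : logChordSq (-θ) = logChordSq θ := by
  simp [logChordSq]

lemma logChordSq_periodic : Function.Periodic logChordSq (2 * π) := by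
  simp [Function.Periodic, logChordSq]

lemma intervalIntegrable_logChordSq (a b : ℝ) : IntervalIntegrable logChordSq volume a b :=
  MeromorphicOn.intervalIntegrable_log (f := fun θ => 2 - 2 * cos θ)
    (analyticOnNhd_const.sub (analyticOnNhd_const.mul analyticOnNhd_cos)).meromorphicOn

lemma hasDerivAt_logChordSq {θ : ℝ} (h : cos θ ≠ 1) :
    HasDerivAt logChordSq (sin θ / (1 - cos θ)) θ := by
  have hne : 1 - cos θ ≠ 0 := sub_ne_zero.2 h.symm
  have := ((hasDerivAt_cos θ).const_mul 2).const_sub 2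
  refine (this.log (by contrapose! hne; linarith)).congr_deriv ?_
  field_simp

/-- With `y = 2 sin (θ/2)` one has `2 - 2 cos θ = y²` and `y ∣ sin (n θ)`, so the product is
`2 (y log y)` times a continuous function. -/
lemma continuous_logChordSq_mul_sin_nat_mul (n : ℕ) :
    Continuous fun θ => logChordSq θ * sin (n * θ) := by
  have key : ∀ θ, logChordSq θ * sin (n * θ) =
      2 * ((2 * sin (θ / 2)) * log (2 * sin (θ / 2))) *
        (cos (θ / 2) * (U ℝ ((n : ℤ) - 1)).eval (cos θ)) := by
    intro θ
    have hU := U_real_cos θ ((n : ℤ) - 1)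
    push_cast at hU
    rw [sub_add_cancel] at hU
    have hθ : θ = 2 * (θ / 2) := by ring
    have hchord : 2 - 2 * cos θ = (2 * sin (θ / 2)) ^ 2 := by
      nth_rewrite 1 [hθ]
      rw [cos_two_mul]; linear_combination -4 * sin_sq_add_cos_sq (θ / 2)
    rw [logChordSq, hchord, log_pow, ← hU]
    nth_rewrite 3 [hθ]
    rw [sin_two_mul]
    push_cast; ring
  simp_rw [key]
  fun_prop

lemma sin_mul_sin_nat_mul (θ : ℝ) (n : ℕ) :
    sin θ * sin (n * θ) =
      (1 - cos θ) * ∑ k ∈ Finset.range n, (cos (k * θ) + cos ((k + 1) * θ)) := by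
  induction n with
  | zero => simp
  | succ n ih =>
    push_cast
    rw [Finset.sum_range_succ, mul_add, ← ih, add_mul, one_mul, sin_add, cos_add]
    linear_combination cos (n * θ) * sin_sq_add_cos_sq θ

lemma integral_cos_nat_mul_zero_pi (k : ℕ) :
    ∫ θ in 0..π, cos (k * θ) = if k = 0 then π else 0 := by
  split_ifs with hk
  · simp [hk]
  · have hk' : (k : ℝ) ≠ 0 := Nat.cast_ne_zero.2 hk
    simp [integral_comp_mul_left (fun θ => cos θ) hk', integral_cos, sin_nat_mul_pi]

lemma integral_sum_cos_add_cos_zero_pi {n : ℕ} (hn : n ≠ 0) :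
    ∫ θ in 0..π, ∑ k ∈ Finset.range n, (cos (k * θ) + cos ((k + 1) * θ)) = π := by
  rw [intervalIntegral.integral_finsetSum fun k _ =>
    Continuous.intervalIntegrable (by fun_prop) _ _]
  have hsucc (k : ℕ) : ∫ θ in 0..π, cos ((k + 1 : ℝ) * θ) = 0 := by
    exact_mod_cast integral_cos_nat_mul_zero_pi (k + 1)
  have hterm (k : ℕ) : ∫ θ in 0..π, (cos (k * θ) + cos ((k + 1) * θ)) = if k = 0 then π else 0 := by
    rw [intervalIntegral.integral_add (Continuous.intervalIntegrable (by fun_prop) _ _)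
      (Continuous.intervalIntegrable (by fun_prop) _ _), hsucc, integral_cos_nat_mul_zero_pi,
      add_zero]
  simp [hterm, Nat.pos_of_ne_zero hn]

lemma integral_logChordSq_mul_cos_nat_mul {n : ℕ} (hn : n ≠ 0) :
    ∫ θ in 0..π, logChordSq θ * cos (n * θ) = -π / n := by
  have hderiv : ∀ θ ∈ Ioo 0 π, HasDerivAt (fun θ => logChordSq θ * sin (n * θ))
      (∑ k ∈ Finset.range n, (cos (k * θ) + cos ((k + 1) * θ)) +
        n * (logChordSq θ * cos (n * θ))) θ := by
    intro θ hθ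
    have hcos : cos θ ≠ 1 :=
      ((cos_lt_cos_of_nonneg_of_le_pi le_rfl hθ.2.le hθ.1).trans_eq cos_zero).ne
    refine ((hasDerivAt_logChordSq hcos).mul ((hasDerivAt_sin _).comp θ
      ((hasDerivAt_id θ).const_mul _))).congr_deriv ?_
    simp only [Function.comp_apply, id, mul_one]
    rw [div_mul_eq_mul_div, sin_mul_sin_nat_mul, mul_div_cancel_left₀ _ (sub_ne_zero.2 hcos.symm)]
    ring
  have hsum_int : IntervalIntegrable
      (fun θ => ∑ k ∈ Finset.range n, (cos (k * θ) + cos ((k + 1) * θ))) volume 0 π :=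
    Continuous.intervalIntegrable (by fun_prop) _ _
  have hint : IntervalIntegrable (fun θ => n * (logChordSq θ * cos (n * θ))) volume 0 π :=
    ((intervalIntegrable_logChordSq 0 π).mul_continuousOn (by fun_prop)).const_mul _
  have hftc := integral_eq_sub_of_hasDerivAt_of_le pi_pos.le
    (continuous_logChordSq_mul_sin_nat_mul n).continuousOn hderiv (hsum_int.add hint)
  rw [intervalIntegral.integral_add hsum_int hint, integral_sum_cos_add_cos_zero_pi hn,
    intervalIntegral.integral_const_mul, sin_nat_mul_pi] at hftc
  simp only [mul_zero, sin_zero, sub_self] at hftc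
  rw [eq_div_iff (Nat.cast_ne_zero.2 hn)]
  linarith

lemma log_abs_cos_sub_cos {θ φ : ℝ} (h : cos φ ≠ cos θ) :
    log |cos φ - cos θ| = -log 2 + (logChordSq (θ - φ) + logChordSq (θ + φ)) / 2 := by
  have hprod : (2 - 2 * cos (θ - φ)) * (2 - 2 * cos (θ + φ)) = (2 * (cos φ - cos θ)) ^ 2 := by
    rw [cos_sub, cos_add]
    linear_combination (-4 * sin φ ^ 2) * sin_sq_add_cos_sq θ
      + (-4 * (1 - cos θ ^ 2)) * sin_sq_add_cos_sq φ
  have hne : 2 * (cos φ - cos θ) ≠ 0 := mul_ne_zero two_ne_zero (sub_ne_zero.2 h)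
  obtain ⟨hsub, hadd⟩ := mul_ne_zero_iff.1 (hprod ▸ pow_ne_zero 2 hne)
  rw [logChordSq, logChordSq, ← log_mul hsub hadd, hprod, log_pow,
    log_mul two_ne_zero (sub_ne_zero.2 h), log_abs]
  push_cast; ring

section EvenPeriodic

variable {f : ℝ → ℝ} (heven : ∀ x, f (-x) = f x) (hper : Function.Periodic f (2 * π))
  (hint : ∀ a b, IntervalIntegrable f volume a b) (n : ℕ)
include heven hper hint

lemma integral_comp_sub_add_comp_add_mul_cos_eq_integral_mul_cos_add (φ : ℝ) :
    ∫ θ in 0..π, (f (θ - φ) + f (θ + φ)) * cos (n * θ) =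
      ∫ u in -π..π, f u * cos (n * (u + φ)) := by
  have hint' (c a b : ℝ) : IntervalIntegrable (fun θ => f (θ - c) * cos (n * θ)) volume a b := by
    have := (hint (a - c) (b - c)).comp_sub_right c
    simp only [sub_add_cancel] at this
    exact this.mul_continuousOn (by fun_prop)
  have hreflect : ∫ θ in 0..π, f (θ + φ) * cos (n * θ) = ∫ θ in -π..0, f (θ - φ) * cos (n * θ) := by
    have := integral_comp_neg (a := 0) (b := π) fun θ => f (θ - φ) * cos (n * θ)
    rw [neg_zero] at this
    rw [← this]
    refine intervalIntegral.integral_congr fun θ _ => ?_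
    rw [← heven, mul_neg, cos_neg]
    ring_nf
  have hperiodic : Function.Periodic (fun u => f u * cos (n * (u + φ))) (2 * π) := by
    intro u
    simp only [hper u, show n * (u + 2 * π + φ) = n * (u + φ) + n * (2 * π) by ring,
      cos_add_nat_mul_two_pi]
  calc ∫ θ in 0..π, (f (θ - φ) + f (θ + φ)) * cos (n * θ)
      = (∫ θ in -π..0, f (θ - φ) * cos (n * θ)) + ∫ θ in 0..π, f (θ - φ) * cos (n * θ) := by
        simp_rw [add_mul]
        rw [intervalIntegral.integral_add (hint' φ 0 π) (by simpa using hint' (-φ) 0 π),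
          hreflect, add_comm]
    _ = ∫ θ in -π..π, f (θ - φ) * cos (n * θ) :=
        integral_add_adjacent_intervals (hint' _ _ _) (hint' _ _ _)
    _ = ∫ u in (-π - φ)..(π - φ), f u * cos (n * (u + φ)) := by
        rw [← integral_comp_sub_right]; simp only [sub_add_cancel]
    _ = ∫ u in -π..π, f u * cos (n * (u + φ)) := by
        have := hperiodic.intervalIntegral_add_eq (-π - φ) (-π)
        rwa [show -π - φ + 2 * π = π - φ by ring, show -π + 2 * π = π by ring] at this

lemma integral_comp_sub_add_comp_add_mul_cos (φ : ℝ) :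
    ∫ θ in 0..π, (f (θ - φ) + f (θ + φ)) * cos (n * θ) =
      2 * cos (n * φ) * ∫ θ in 0..π, f θ * cos (n * θ) := by
  let A φ := ∫ u in -π..π, f u * cos (n * (u + φ))
  have hA (φ : ℝ) : ∫ θ in 0..π, (f (θ - φ) + f (θ + φ)) * cos (n * θ) = A φ :=
    integral_comp_sub_add_comp_add_mul_cos_eq_integral_mul_cos_add heven hper hint n φ
  have hint' (c : ℝ) : IntervalIntegrable (fun u => f u * cos (n * (u + c))) volume (-π) π :=
    (hint _ _).mul_continuousOn (by fun_prop)
  have hsymm : A (-φ) = A φ := by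
    rw [← hA, ← hA]
    congr 1 with θ
    rw [sub_neg_eq_add, ← sub_eq_add_neg, add_comm]
  have hsum : A φ + A (-φ) = 2 * cos (n * φ) * A 0 := by
    simp only [A, ← intervalIntegral.integral_add (hint' _) (hint' _),
      ← intervalIntegral.integral_const_mul]
    refine intervalIntegral.integral_congr fun u _ => ?_
    simp only [add_zero, mul_add, mul_neg, cos_add, cos_neg, sin_neg]
    ring
  have hzero : A 0 = 2 * ∫ θ in 0..π, f θ * cos (n * θ) := by
    simp only [← hA, sub_zero, add_zero, ← two_mul, mul_assoc,
      intervalIntegral.integral_const_mul]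
  rw [hA]
  linear_combination (hsum - hsymm) / 2 + cos (n * φ) * hzero

end EvenPeriodic

lemma integral_log_abs_cos_sub_cos_mul_cos {n : ℕ} (hn : n ≠ 0) (φ : ℝ) :
    ∫ θ in 0..π, log |cos φ - cos θ| * cos (n * θ) = -(π / n) * cos (n * φ) := by
  have hcountable : {θ | cos φ = cos θ}.Countable := by
    refine ((countable_range fun k : ℤ => 2 * k * π + φ).union
      (countable_range fun k : ℤ => 2 * k * π - φ)).mono fun θ hθ => ?_
    obtain ⟨k, hk | hk⟩ := cos_eq_cos_iff.1 hθ
    · exact Or.inl ⟨k, hk.symm⟩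
    · exact Or.inr ⟨k, hk.symm⟩
  have hsplit : ∫ θ in 0..π, log |cos φ - cos θ| * cos (n * θ) =
      ∫ θ in 0..π, (-log 2 * cos (n * θ) +
        (logChordSq (θ - φ) + logChordSq (θ + φ)) * cos (n * θ) / 2) := by
    refine integral_congr_ae ?_
    filter_upwards [hcountable.ae_notMem volume] with θ hθ _
    rw [log_abs_cos_sub_cos hθ]
    ring
  rw [hsplit, intervalIntegral.integral_add, intervalIntegral.integral_const_mul,
    intervalIntegral.integral_div,
    integral_comp_sub_add_comp_add_mul_cos logChordSq_neg logChordSq_periodic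
      intervalIntegrable_logChordSq,
    integral_logChordSq_mul_cos_nat_mul hn]
  · rw [integral_cos_nat_mul_zero_pi, if_neg hn]
    ring
  · exact Continuous.intervalIntegrable (by fun_prop) _ _
  · have hshift (c : ℝ) : IntervalIntegrable (fun θ => logChordSq (θ + c)) volume 0 π := by
      simpa using (intervalIntegrable_logChordSq c (π + c)).comp_add_right c
    simp_rw [sub_eq_add_neg]
    exact (((hshift _).add (hshift _)).mul_continuousOn (by fun_prop)).div_const 2

/-- `∫_{-1}^1 log|s-t| (1-t²)^{-1/2} T_n(t) dt = -(π/n) T_n(s)` for `n ≥ 1`, `s ∈ (-1,1)`. -/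
theorem log_kernel_chebyshev (n : ℕ) (hn : 1 ≤ n) (s : ℝ) (hs : s ∈ Set.Ioo (-1:ℝ) 1) :
    (∫ t in (-1:ℝ)..1,
        Real.log |s - t| * (1 - t ^ 2) ^ (-(1/2) : ℝ) * (Polynomial.Chebyshev.T ℝ n).eval t) =
      -(Real.pi / n) * (Polynomial.Chebyshev.T ℝ n).eval s := by
  obtain ⟨φ, rfl⟩ : ∃ φ, cos φ = s := ⟨arccos s, cos_arccos hs.1.le hs.2.le⟩
  have hT (θ : ℝ) : (T ℝ n).eval (cos θ) = cos (n * θ) := by simp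
  calc (∫ t in (-1:ℝ)..1, log |cos φ - t| * (1 - t ^ 2) ^ (-(1/2) : ℝ) * (T ℝ n).eval t)
      = ∫ t in (-1:ℝ)..1, (1 - t ^ 2) ^ (-(1/2) : ℝ) * (log |cos φ - t| * (T ℝ n).eval t) := by
        congr 1 with t; ring
    _ = ∫ θ in 0..π, log |cos φ - cos θ| * cos (n * θ) := by
        simp only [integral_one_sub_sq_rpow_neg_half_mul_eq_integral_comp_cos, hT]
    _ = -(π / n) * (T ℝ n).eval (cos φ) := by
        rw [integral_log_abs_cos_sub_cos_mul_cos (by omega), hT]
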